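/- Let S ⊆ M_d be a finite set, let Φ : M_d → M_d be a unital completely positive map, and let E : M_d → M_d be a Hermitian-preserving linear map whose range commutes with every element of S (i.e. s·E(x) = E(x)·s for all s ∈ S, x ∈ M_d), such that Φ ∘ E = E. Then Lip_S(Φ) ≤ 2 · (max_{s∈S} ‖s‖) · Cost_S(E), where Lip_S and Cost_S are taken with respect to the commutator seminorm |||·|||_S and the inequality is in [0,∞]. -/

import Mathlib

open scoped ENNReal NNReal ComplexOrder Matrix Matrix.Norms.L2Operator Kronecker

noncomputable section

/-- The amplification `id_{M_n} ⊗ Φ` of a map on matrices, acting blockwise. -/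
def ampFun {ι : Type*} (Φ : Matrix ι ι ℂ → Matrix ι ι ℂ) (n : ℕ)
    (X : Matrix (Fin n × ι) (Fin n × ι) ℂ) : Matrix (Fin n × ι) (Fin n × ι) ℂ :=
  Matrix.of fun p q => Φ (Matrix.of fun k l => X (p.1, k) (q.1, l)) p.2 q.2

/-- A unital completely positive map on `Matrix ι ι ℂ`: a linear map sending `1` to `1`
all of whose amplifications preserve positive semidefiniteness. -/
structure IsUCP {ι : Type*} [Fintype ι] [DecidableEq ι]
    (Φ : Matrix ι ι ℂ → Matrix ι ι ℂ) : Prop where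
  map_add : ∀ x y, Φ (x + y) = Φ x + Φ y
  map_smul : ∀ (c : ℂ) (x), Φ (c • x) = c • Φ x
  unital : Φ 1 = 1
  cp : ∀ (n : ℕ) (X : Matrix (Fin n × ι) (Fin n × ι) ℂ),
    X.PosSemidef → (ampFun Φ n X).PosSemidef

/-- Transportation cost of a map `Φ` w.r.t. a seminorm `L`, valued in `[0,∞]`. -/
def Cost {ι : Type*} [Fintype ι] [DecidableEq ι] (L : Matrix ι ι ℂ → ℝ)
    (Φ : Matrix ι ι ℂ → Matrix ι ι ℂ) : ℝ≥0∞ :=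
  ⨆ x ∈ {x : Matrix ι ι ℂ | x.IsHermitian ∧ L x ≤ 1}, ENNReal.ofReal ‖Φ x - x‖

/-- Lipschitz constant of a map `Φ` w.r.t. a seminorm `L`, valued in `[0,∞]`. -/
def Lip {ι : Type*} [Fintype ι] [DecidableEq ι] (L : Matrix ι ι ℂ → ℝ)
    (Φ : Matrix ι ι ℂ → Matrix ι ι ℂ) : ℝ≥0∞ :=
  ⨆ x ∈ {x : Matrix ι ι ℂ | x.IsHermitian ∧ L x ≤ 1}, ENNReal.ofReal (L (Φ x))

/-- Commutator seminorm `|||x|||_S = max_{s ∈ S} ‖s*x - x*s‖` (operator norm). -/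
def cnorm {ι : Type*} [Fintype ι] [DecidableEq ι] (S : Finset (Matrix ι ι ℂ))
    (x : Matrix ι ι ℂ) : ℝ :=
  ((S.sup fun s => ‖s * x - x * s‖₊ : ℝ≥0) : ℝ)

/-- Amplified commutator seminorm `|||X|||_{S,n} = max_{s∈S} ‖(1ₙ⊗s)X - X(1ₙ⊗s)‖` on
`M_n ⊗ M_ι`. -/
def cnormAmp {ι : Type*} [Fintype ι] [DecidableEq ι] (S : Finset (Matrix ι ι ℂ)) (n : ℕ)
    (X : Matrix (Fin n × ι) (Fin n × ι) ℂ) : ℝ :=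
  ((S.sup fun s => ‖((1 : Matrix (Fin n) (Fin n) ℂ) ⊗ₖ s) * X
      - X * ((1 : Matrix (Fin n) (Fin n) ℂ) ⊗ₖ s)‖₊ : ℝ≥0) : ℝ)

/-- Complete transportation cost w.r.t. the commutator seminorms of `S`. -/
def Costcb {ι : Type*} [Fintype ι] [DecidableEq ι] (S : Finset (Matrix ι ι ℂ))
    (Φ : Matrix ι ι ℂ → Matrix ι ι ℂ) : ℝ≥0∞ :=
  ⨆ (n : ℕ), ⨆ X ∈ {X : Matrix (Fin n × ι) (Fin n × ι) ℂ |
      X.IsHermitian ∧ cnormAmp S n X ≤ 1}, ENNReal.ofReal ‖ampFun Φ n X - X‖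

/-- Complete Lipschitz constant w.r.t. the commutator seminorms of `S`. -/
def Lipcb {ι : Type*} [Fintype ι] [DecidableEq ι] (S : Finset (Matrix ι ι ℂ))
    (Φ : Matrix ι ι ℂ → Matrix ι ι ℂ) : ℝ≥0∞ :=
  ⨆ (n : ℕ), ⨆ X ∈ {X : Matrix (Fin n × ι) (Fin n × ι) ℂ |
      X.IsHermitian ∧ cnormAmp S n X ≤ 1}, ENNReal.ofReal (cnormAmp S n (ampFun Φ n X))

/-!
Write `Φ x = Φ (x - E x) + E x`. As `E x` commutes with `S`, the commutators of `Φ x` with `S`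
are those of `Φ (x - E x)`, and `‖s y - y s‖ ≤ 2 ‖s‖ ‖y‖`. A UCP map preserves the operator
inequalities `-‖z‖ ≤ z ≤ ‖z‖` for Hermitian `z`, hence is contractive on Hermitian matrices, so
`‖Φ (x - E x)‖ ≤ ‖x - E x‖ ≤ Cost_S(E)` whenever `|||x|||_S ≤ 1`.
-/

open scoped MatrixOrder

lemma IsSelfAdjoint.norm_le_of_neg_le_of_le {A : Type*} [CStarAlgebra A] [PartialOrder A]
    [StarOrderedRing A] {a : A} (ha : IsSelfAdjoint a) {r : ℝ} (hr : 0 ≤ r)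
    (h₁ : -algebraMap ℝ A r ≤ a) (h₂ : a ≤ algebraMap ℝ A r) : ‖a‖ ≤ r := by
  obtain hA | hA := subsingleton_or_nontrivial A
  · rwa [Subsingleton.elim a 0, norm_zero]
  rw [← map_neg, algebraMap_le_iff_le_spectrum ha] at h₁
  rw [le_algebraMap_iff_spectrum_le ha] at h₂
  rcases CStarAlgebra.norm_or_neg_norm_mem_spectrum ha with h | h
  · exact h₂ _ h
  · linarith [h₁ _ h]

namespace IsUCP

variable {ι : Type*} [Fintype ι] [DecidableEq ι] {Φ : Matrix ι ι ℂ → Matrix ι ι ℂ}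

def toLinearMap (hΦ : IsUCP Φ) : Matrix ι ι ℂ →ₗ[ℂ] Matrix ι ι ℂ where
  toFun := Φ
  map_add' := hΦ.map_add
  map_smul' := hΦ.map_smul

-- The amplification `ampFun Φ 1` is `Φ` itself, up to relabelling `ι ≃ Fin 1 × ι`.
lemma posSemidef_map (hΦ : IsUCP Φ) {y : Matrix ι ι ℂ} (hy : y.PosSemidef) :
    (Φ y).PosSemidef :=
  (hΦ.cp 1 _ (hy.submatrix Prod.snd)).submatrix fun i => ((0 : Fin 1), i)

def toPositiveLinearMap (hΦ : IsUCP Φ) : Matrix ι ι ℂ →ₚ[ℂ] Matrix ι ι ℂ :=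
  .mk₀ hΦ.toLinearMap fun _ hy =>
    (hΦ.posSemidef_map (Matrix.nonneg_iff_posSemidef.mp hy)).nonneg

lemma map_le_algebraMap_norm (hΦ : IsUCP Φ) {z : Matrix ι ι ℂ} (hz : z.IsHermitian) :
    Φ z ≤ algebraMap ℝ _ ‖z‖ := by
  have h := hΦ.toPositiveLinearMap.apply_le_of_isSelfAdjoint z hz.isSelfAdjoint
  rw [Algebra.algebraMap_eq_smul_one, PositiveLinearMap.map_smul_of_tower] at h
  rwa [Algebra.algebraMap_eq_smul_one, ← hΦ.unital]

lemma norm_map_le (hΦ : IsUCP Φ) {z : Matrix ι ι ℂ} (hz : z.IsHermitian) : ‖Φ z‖ ≤ ‖z‖ := by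
  have hneg : Φ (-z) = -Φ z := hΦ.toLinearMap.map_neg z
  refine (hz.isSelfAdjoint.map' hΦ.toPositiveLinearMap).norm_le_of_neg_le_of_le (norm_nonneg z)
    ?_ (hΦ.map_le_algebraMap_norm hz)
  have := hΦ.map_le_algebraMap_norm hz.neg
  rwa [hneg, norm_neg, neg_le] at this

end IsUCP

section CommutatorSeminorm

variable {ι : Type*} [Fintype ι] [DecidableEq ι] (S : Finset (Matrix ι ι ℂ))

lemma cnorm_add_of_commute {y e : Matrix ι ι ℂ} (he : ∀ s ∈ S, s * e = e * s) :
    cnorm S (y + e) = cnorm S y := by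
  rw [cnorm, cnorm, Finset.sup_congr rfl fun s hs => ?_]
  rw [mul_add, add_mul, he s hs, add_sub_add_right_eq_sub]

lemma cnorm_le_two_mul_sup_norm_mul_norm (y : Matrix ι ι ℂ) :
    cnorm S y ≤ 2 * (S.sup fun s => ‖s‖₊ : ℝ≥0) * ‖y‖ := by
  suffices h : (S.sup fun s => ‖s * y - y * s‖₊ : ℝ≥0) ≤ 2 * (S.sup fun s => ‖s‖₊) * ‖y‖₊ from
    mod_cast h
  refine Finset.sup_le fun s hs => ?_
  have hs : ‖s‖₊ ≤ S.sup fun s => ‖s‖₊ := Finset.le_sup hs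
  calc ‖s * y - y * s‖₊ ≤ ‖s‖₊ * ‖y‖₊ + ‖y‖₊ * ‖s‖₊ :=
        (nnnorm_sub_le _ _).trans (add_le_add (Matrix.l2_opNNNorm_mul _ _)
          (Matrix.l2_opNNNorm_mul _ _))
    _ ≤ 2 * (S.sup fun s => ‖s‖₊) * ‖y‖₊ := by
        rw [mul_comm ‖y‖₊, ← two_mul, mul_assoc]
        gcongr

end CommutatorSeminorm

lemma ofReal_norm_sub_le_cost {ι : Type*} [Fintype ι] [DecidableEq ι]
    {L : Matrix ι ι ℂ → ℝ} (E : Matrix ι ι ℂ → Matrix ι ι ℂ) {x : Matrix ι ι ℂ}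
    (hx : x.IsHermitian) (hxL : L x ≤ 1) : ENNReal.ofReal ‖E x - x‖ ≤ Cost L E :=
  le_iSup₂_of_le (f := fun x (_ : x ∈ {x : Matrix ι ι ℂ | x.IsHermitian ∧ L x ≤ 1}) =>
    ENNReal.ofReal ‖E x - x‖) x ⟨hx, hxL⟩ le_rfl

theorem lip_le_two_mul_norm_mul_cost_general {d : ℕ}
    (S : Finset (Matrix (Fin d) (Fin d) ℂ))
    (Φ E : Matrix (Fin d) (Fin d) ℂ → Matrix (Fin d) (Fin d) ℂ)
    (hΦ : IsUCP Φ)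
    (hE_herm : ∀ x, (E x)ᴴ = E xᴴ)
    (hE_comm : ∀ s ∈ S, ∀ x, s * E x = E x * s)
    (hΦE : ∀ x, Φ (E x) = E x) :
    Lip (cnorm S) Φ ≤ 2 * ((S.sup fun s => ‖s‖₊ : ℝ≥0) : ℝ≥0∞) * Cost (cnorm S) E := by
  set M : ℝ≥0 := S.sup fun s => ‖s‖₊
  refine iSup₂_le fun x ⟨hx, hxS⟩ => ?_
  have hx_sub : (x - E x).IsHermitian := hx.sub (by rw [Matrix.IsHermitian, hE_herm, hx.eq])
  have hΦx : Φ x = Φ (x - E x) + E x := by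
    conv_lhs => rw [← sub_add_cancel x (E x), hΦ.map_add, hΦE]
  calc ENNReal.ofReal (cnorm S (Φ x)) = ENNReal.ofReal (cnorm S (Φ (x - E x))) := by
        rw [hΦx, cnorm_add_of_commute S fun s hs => hE_comm s hs x]
    _ ≤ ENNReal.ofReal (2 * M * ‖E x - x‖) := by
        gcongr
        rw [norm_sub_rev]
        refine (cnorm_le_two_mul_sup_norm_mul_norm S _).trans ?_
        gcongr
        exact hΦ.norm_map_le hx_sub
    _ = 2 * M * ENNReal.ofReal ‖E x - x‖ := by
        rw [ENNReal.ofReal_mul (by positivity), ENNReal.ofReal_mul zero_le_two]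
        simp
    _ ≤ 2 * M * Cost (cnorm S) E := by
        gcongr
        exact ofReal_norm_sub_le_cost E hx hxS

/-- Universal upper bound for the Lipschitz constant: if the range of the
Hermitian-preserving map `E` commutes with every element of `S` and `Φ ∘ E = E` for a UCP
map `Φ`, then `Lip_S(Φ) ≤ 2 · (max_{s∈S} ‖s‖) · Cost_S(E)`. -/
theorem lip_le_two_mul_norm_mul_cost {d : ℕ}
    (S : Finset (Matrix (Fin d) (Fin d) ℂ))
    (Φ E : Matrix (Fin d) (Fin d) ℂ → Matrix (Fin d) (Fin d) ℂ)
    (hΦ : IsUCP Φ)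
    (hE_lin : ∀ (c : ℂ) (x y), E (c • x + y) = c • E x + E y)
    (hE_herm : ∀ x, (E x)ᴴ = E xᴴ)
    (hE_comm : ∀ s ∈ S, ∀ x, s * E x = E x * s)
    (hΦE : ∀ x, Φ (E x) = E x) :
    Lip (cnorm S) Φ ≤ 2 * ((S.sup fun s => ‖s‖₊ : ℝ≥0) : ℝ≥0∞) * Cost (cnorm S) E :=
  lip_le_two_mul_norm_mul_cost_general S Φ E hΦ hE_herm hE_comm hΦE

end
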